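/- arXiv:1908.07023 — 4 statements merged into one kernel-verified Lean document; each statement's English description precedes it below -/
import Mathlib

section
/- Let J : ℝ^M → ℝ be differentiable with δ-Lipschitz gradient, let 0 < μ ≤ 2/(δ(1+β²)), and set c₂ = (δ/2)σ². Let w ∈ ℝ^M be arbitrary and let s : Ω → ℝ^M be a random vector with E[s] = 0 and E[‖s‖²] ≤ β²‖∇J(w)‖² + σ². Then E[J(w − μ∇J(w) − μs)] ≤ J(w) + μ²c₂. -/
open MeasureTheory

lemma descent_lemma {M : ℕ} (J : EuclideanSpace ℝ (Fin M) → ℝ) (δ : ℝ)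
    (hdiff : Differentiable ℝ J)
    (hlip : ∀ x y, ‖gradient J x - gradient J y‖ ≤ δ * ‖x - y‖)
    (hδ : 0 ≤ δ) (x v : EuclideanSpace ℝ (Fin M)) :
    J (x + v) ≤ J x + inner ℝ (gradient J x) v + δ / 2 * ‖v‖ ^ 2 := by
  have hgrad_cont : Continuous (gradient J) :=
    (LipschitzWith.of_dist_le_mul (K := ⟨δ, hδ⟩) (fun a b => by
      rw [dist_eq_norm, dist_eq_norm]; exact hlip a b)).continuous
  have hderiv : ∀ t : ℝ, HasDerivAt (fun t : ℝ => J (x + t • v))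
      (inner ℝ (gradient J (x + t • v)) v : ℝ) t := by
    intro t
    have hc : HasDerivAt (fun t : ℝ => x + t • v) v t := by
      simpa using ((hasDerivAt_id t).smul_const v).const_add x
    have hg := (hdiff (x + t • v)).hasGradientAt
    simpa [Function.comp_def] using hg.hasFDerivAt.comp_hasDerivAt t hc
  have hcont : Continuous fun t : ℝ => (inner ℝ (gradient J (x + t • v)) v : ℝ) :=
    (hgrad_cont.comp (continuous_const.add (continuous_id.smul continuous_const))).inner
      continuous_const
  have key : J (x + v) - J x = ∫ t in (0:ℝ)..1, (inner ℝ (gradient J (x + t • v)) v : ℝ) := by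
    have := intervalIntegral.integral_eq_sub_of_hasDerivAt
      (fun t _ => hderiv t) (hcont.intervalIntegrable 0 1)
    simp only [one_smul, zero_smul, add_zero] at this
    exact this.symm
  have hint2 : IntervalIntegrable (fun t : ℝ => (inner ℝ (gradient J x) v : ℝ) + δ * t * ‖v‖ ^ 2)
      volume 0 1 :=
    by apply Continuous.intervalIntegrable; fun_prop
  have hbound : ∫ t in (0:ℝ)..1, (inner ℝ (gradient J (x + t • v)) v : ℝ)
      ≤ ∫ t in (0:ℝ)..1, ((inner ℝ (gradient J x) v : ℝ) + δ * t * ‖v‖ ^ 2) := by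
    apply intervalIntegral.integral_mono_on (by norm_num)
      (hcont.intervalIntegrable 0 1) hint2
    intro t ht
    have h1 : (inner ℝ (gradient J (x + t • v)) v : ℝ)
        = inner ℝ (gradient J x) v + inner ℝ (gradient J (x + t • v) - gradient J x) v := by
      rw [inner_sub_left]; ring
    rw [h1]
    have h2 : (inner ℝ (gradient J (x + t • v) - gradient J x) v : ℝ) ≤ δ * t * ‖v‖ ^ 2 := by
      calc (inner ℝ (gradient J (x + t • v) - gradient J x) v : ℝ)
          ≤ ‖gradient J (x + t • v) - gradient J x‖ * ‖v‖ := real_inner_le_norm _ _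
        _ ≤ δ * ‖(x + t • v) - x‖ * ‖v‖ := by
            have := hlip (x + t • v) x
            nlinarith [norm_nonneg v]
        _ = δ * t * ‖v‖ ^ 2 := by
            rw [add_sub_cancel_left, norm_smul, Real.norm_eq_abs, abs_of_nonneg ht.1]
            ring
    linarith
  have hrhs : ∫ t in (0:ℝ)..1, ((inner ℝ (gradient J x) v : ℝ) + δ * t * ‖v‖ ^ 2)
      = inner ℝ (gradient J x) v + δ / 2 * ‖v‖ ^ 2 := by
    have hi1 : IntervalIntegrable (fun _ : ℝ => (inner ℝ (gradient J x) v : ℝ)) volume 0 1 :=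
      intervalIntegrable_const
    have hi2 : IntervalIntegrable (fun t : ℝ => δ * t * ‖v‖ ^ 2) volume 0 1 := by
      apply Continuous.intervalIntegrable; fun_prop
    rw [intervalIntegral.integral_add hi1 hi2]
    have : (fun t : ℝ => δ * t * ‖v‖ ^ 2) = fun t : ℝ => (δ * ‖v‖ ^ 2) * t := by
      funext t; ring
    rw [this, intervalIntegral.integral_const_mul, integral_id]
    simp
    ring
  rw [hrhs] at hbound
  linarith [key]


/-- Bounded expected ascent: for any `w`, with `0 < μ ≤ 2/(δ(1+β²))` and `c₂ = (δ/2)σ²`,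
the stochastic gradient update satisfies `E[J(w − μ∇J(w) − μs)] ≤ J(w) + μ²c₂`. -/
theorem bounded_expected_ascent
    {Ω : Type*} [MeasurableSpace Ω] (P : Measure Ω) [IsProbabilityMeasure P]
    {M : ℕ} (J : EuclideanSpace ℝ (Fin M) → ℝ) (δ : ℝ)
    (hdiff : Differentiable ℝ J)
    (hlip : ∀ x y, ‖gradient J x - gradient J y‖ ≤ δ * ‖x - y‖)
    (β2 σ2 : ℝ) (hβ2 : 0 ≤ β2) (hσ2 : 0 ≤ σ2)
    (μ : ℝ) (hμ0 : 0 < μ) (hμ : μ ≤ 2 / (δ * (1 + β2)))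
    (c₂ : ℝ) (hc₂ : c₂ = (δ / 2) * σ2)
    (w : EuclideanSpace ℝ (Fin M))
    (s : Ω → EuclideanSpace ℝ (Fin M))
    (hs_int : Integrable s P)
    (hs_mean : ∫ ω, s ω ∂P = 0)
    (hs2_int : Integrable (fun ω => ‖s ω‖ ^ 2) P)
    (hs2 : ∫ ω, ‖s ω‖ ^ 2 ∂P ≤ β2 * ‖gradient J w‖ ^ 2 + σ2)
    (hJ_int : Integrable (fun ω => J (w - μ • gradient J w - μ • s ω)) P) :
    ∫ ω, J (w - μ • gradient J w - μ • s ω) ∂P ≤ J w + μ ^ 2 * c₂ := by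

  set g := gradient J w with hg
  -- δ is positive
  have hδ : 0 < δ := by
    by_contra h
    push_neg at h
    have h1 : δ * (1 + β2) ≤ 0 := mul_nonpos_of_nonpos_of_nonneg h (by linarith)
    have h2 : 2 / (δ * (1 + β2)) ≤ 0 := div_nonpos_of_nonneg_of_nonpos (by norm_num) h1
    linarith
  have hδβ : 0 < δ * (1 + β2) := by positivity
  have hμδ : μ * (δ * (1 + β2)) ≤ 2 := by
    rw [le_div_iff₀ hδβ] at hμ; linarith
  set C := J w - μ * ‖g‖ ^ 2 + δ / 2 * μ ^ 2 * ‖g‖ ^ 2 with hC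
  set A := -μ + δ * μ ^ 2 with hA
  set B := δ / 2 * μ ^ 2 with hB
  have hinner_int : Integrable (fun ω => (inner ℝ g (s ω) : ℝ)) P := hs_int.const_inner g
  have hpt : ∀ ω, J (w - μ • g - μ • s ω)
      ≤ C + A * inner ℝ g (s ω) + B * ‖s ω‖ ^ 2 := by
    intro ω
    have hv : w - μ • g - μ • s ω = w + (-(μ • (g + s ω))) := by module
    have hd := descent_lemma J δ hdiff hlip hδ.le w (-(μ • (g + s ω)))
    rw [hv]
    refine le_trans hd (le_of_eq ?_)
    have h1 : (inner ℝ g (-(μ • (g + s ω))) : ℝ) = -(μ * ‖g‖ ^ 2) - μ * inner ℝ g (s ω) := by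
      rw [inner_neg_right, real_inner_smul_right, inner_add_right,
        real_inner_self_eq_norm_sq]
      ring
    have h2 : ‖-(μ • (g + s ω))‖ ^ 2 = μ ^ 2 * (‖g‖ ^ 2 + 2 * inner ℝ g (s ω) + ‖s ω‖ ^ 2) := by
      rw [norm_neg, norm_smul, mul_pow, norm_add_sq_real, Real.norm_eq_abs, sq_abs]
      all_goals ring
    rw [h1, h2, hC, hA, hB]
    all_goals ring
  have hFint : Integrable (fun ω => C + A * inner ℝ g (s ω) + B * ‖s ω‖ ^ 2) P :=
    ((integrable_const C).add (hinner_int.const_mul A)).add (hs2_int.const_mul B)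
  have hmono : ∫ ω, J (w - μ • g - μ • s ω) ∂P
      ≤ ∫ ω, (C + A * inner ℝ g (s ω) + B * ‖s ω‖ ^ 2) ∂P :=
    integral_mono hJ_int hFint hpt
  have hIs : ∫ ω, (inner ℝ g (s ω) : ℝ) ∂P = 0 := by
    rw [integral_inner hs_int g, hs_mean, inner_zero_right]
  have hFval : ∫ ω, (C + A * inner ℝ g (s ω) + B * ‖s ω‖ ^ 2) ∂P
      = C + B * ∫ ω, ‖s ω‖ ^ 2 ∂P := by
    have e1 : ∫ ω, (C + A * inner ℝ g (s ω) + B * ‖s ω‖ ^ 2) ∂P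
        = (∫ ω, (C + A * inner ℝ g (s ω)) ∂P) + ∫ ω, B * ‖s ω‖ ^ 2 ∂P :=
      integral_add ((integrable_const C).add (hinner_int.const_mul A)) (hs2_int.const_mul B)
    have e2 : ∫ ω, (C + A * inner ℝ g (s ω)) ∂P
        = (∫ ω, (C : ℝ) ∂P) + ∫ ω, A * inner ℝ g (s ω) ∂P :=
      integral_add (integrable_const C) (hinner_int.const_mul A)
    rw [e1, e2, integral_const, integral_const_mul, integral_const_mul, hIs]
    simp [measure_univ]
  rw [hFval] at hmono
  refine le_trans hmono ?_
  rw [hC, hB, hc₂]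
  have hS := hs2
  have hG : (0:ℝ) ≤ ‖g‖ ^ 2 := sq_nonneg _
  nlinarith [mul_le_mul_of_nonneg_left hS (by positivity : (0:ℝ) ≤ δ / 2 * μ ^ 2),
    mul_nonneg (mul_nonneg hμ0.le hG) (sub_nonneg.2 hμδ)]
end

section
/- Let J : ℝ^M → ℝ be twice differentiable with δ-Lipschitz gradient, let w, v ∈ ℝ^M, 0 < μ < 1/δ, and let s : Ω → ℝ^M be a random vector with E[s] = 0 and E[‖s‖²] ≤ β²‖∇J(v)‖² + σ². Then E[‖(w − v) + μ∇J(v) + μs‖²] ≤ (((1+μδ)² + 2μ²β²δ²(1−μδ))/(1−μδ))·‖w − v‖² + μ(1/δ + 2μβ²)‖∇J(w)‖² + μ²σ². -/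
open MeasureTheory

set_option maxHeartbeats 1000000

/-- One-step recursion bound for the deviation `w̃ = w − v` of a stochastic gradient
iterate from an anchor point: if the zero-mean noise satisfies
`E[‖s‖²] ≤ β²‖∇J(v)‖² + σ²`, then
`E[‖(w−v) + μ∇J(v) + μs‖²] ≤ (((1+μδ)² + 2μ²β²δ²(1−μδ))/(1−μδ))‖w−v‖²
  + μ(1/δ + 2μβ²)‖∇J(w)‖² + μ²σ²`. -/
theorem deviation_one_step_bound
    {Ω : Type*} [MeasurableSpace Ω] (P : Measure Ω) [IsProbabilityMeasure P]
    {M : ℕ} (J : EuclideanSpace ℝ (Fin M) → ℝ) (δ : ℝ) (hδ : 0 < δ)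
    (hdiff : Differentiable ℝ J)
    (hdiff2 : Differentiable ℝ (gradient J))
    (hlip : ∀ x y, ‖gradient J x - gradient J y‖ ≤ δ * ‖x - y‖)
    (w v : EuclideanSpace ℝ (Fin M))
    (μ : ℝ) (hμ0 : 0 < μ) (hμ : μ < 1 / δ)
    (β2 σ2 : ℝ) (hβ2 : 0 ≤ β2) (hσ2 : 0 ≤ σ2)
    (s : Ω → EuclideanSpace ℝ (Fin M))
    (hs_int : Integrable s P)
    (hs_mean : ∫ ω, s ω ∂P = 0)
    (hs2_int : Integrable (fun ω => ‖s ω‖ ^ 2) P)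
    (hs2 : ∫ ω, ‖s ω‖ ^ 2 ∂P ≤ β2 * ‖gradient J v‖ ^ 2 + σ2) :
    ∫ ω, ‖(w - v) + μ • gradient J v + μ • s ω‖ ^ 2 ∂P
      ≤ ((1 + μ * δ) ^ 2 + 2 * μ ^ 2 * β2 * δ ^ 2 * (1 - μ * δ)) / (1 - μ * δ)
          * ‖w - v‖ ^ 2
        + μ * (1 / δ + 2 * μ * β2) * ‖gradient J w‖ ^ 2
        + μ ^ 2 * σ2 := by
  have hone : (0:ℝ) < 1 - μ * δ := by
    have h := (lt_div_iff₀ hδ).mp hμ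
    linarith
  set a : EuclideanSpace ℝ (Fin M) := (w - v) + μ • gradient J v with ha_def
  set X : ℝ := ‖w - v‖ with hX
  set G : ℝ := ‖gradient J w‖ with hG
  set S : ℝ := ∫ ω, ‖s ω‖ ^ 2 ∂P with hS
  -- Step 1: compute the expectation
  have hμs : Integrable (fun ω => μ • s ω) P := hs_int.smul μ
  have hint1 : Integrable (fun ω => (2:ℝ) * inner ℝ a (μ • s ω)) P :=
    (hμs.const_inner a).const_mul 2
  have hsq : (fun ω => ‖μ • s ω‖ ^ 2) = fun ω => μ ^ 2 * ‖s ω‖ ^ 2 := by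
    funext ω
    rw [norm_smul, mul_pow, Real.norm_eq_abs, sq_abs]
  have hint2 : Integrable (fun ω => ‖μ • s ω‖ ^ 2) P := by
    rw [hsq]; exact hs2_int.const_mul _
  have hexp : ∫ ω, ‖a + μ • s ω‖ ^ 2 ∂P = ‖a‖ ^ 2 + μ ^ 2 * S := by
    have h1 : ∀ ω, ‖a + μ • s ω‖ ^ 2
        = ‖a‖ ^ 2 + 2 * inner ℝ a (μ • s ω) + ‖μ • s ω‖ ^ 2 := fun ω =>
      norm_add_sq_real a (μ • s ω)
    calc ∫ ω, ‖a + μ • s ω‖ ^ 2 ∂P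
        = ∫ ω, (‖a‖ ^ 2 + 2 * inner ℝ a (μ • s ω) + ‖μ • s ω‖ ^ 2) ∂P := by
          exact integral_congr_ae (Filter.Eventually.of_forall h1)
      _ = (∫ _ω, ‖a‖ ^ 2 ∂P) + (∫ ω, 2 * inner ℝ a (μ • s ω) ∂P)
            + ∫ ω, ‖μ • s ω‖ ^ 2 ∂P := by
          have hint12 : Integrable
              (fun ω => ‖a‖ ^ 2 + 2 * inner ℝ a (μ • s ω)) P :=
            (integrable_const _).add hint1
          rw [integral_add hint12 hint2, integral_add (integrable_const _) hint1]
      _ = ‖a‖ ^ 2 + μ ^ 2 * S := by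
          rw [integral_const, integral_const_mul, integral_inner hμs,
            integral_smul, hs_mean, smul_zero, inner_zero_right, hsq,
            integral_const_mul]
          simp [hS, measure_univ]
  -- Step 2: deterministic bound on ‖a‖
  have hd : ‖gradient J w - gradient J v‖ ≤ δ * X := hlip w v
  have ha : a = ((w - v) - μ • (gradient J w - gradient J v)) + μ • gradient J w := by
    rw [ha_def]; module
  have hnorm : ‖a‖ ≤ (1 + μ * δ) * X + μ * G := by
    rw [ha]
    calc ‖((w - v) - μ • (gradient J w - gradient J v)) + μ • gradient J w‖
        ≤ ‖(w - v) - μ • (gradient J w - gradient J v)‖ + ‖μ • gradient J w‖ :=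
          norm_add_le _ _
      _ ≤ (‖w - v‖ + ‖μ • (gradient J w - gradient J v)‖) + ‖μ • gradient J w‖ := by
          gcongr
          exact norm_sub_le _ _
      _ ≤ (1 + μ * δ) * X + μ * G := by
          rw [norm_smul, norm_smul, Real.norm_eq_abs, abs_of_pos hμ0]
          have := mul_le_mul_of_nonneg_left hd hμ0.le
          simp only [hX, hG]
          nlinarith
  have hasq : ‖a‖ ^ 2 ≤ ((1 + μ * δ) * X + μ * G) ^ 2 :=
    pow_le_pow_left₀ (norm_nonneg a) hnorm 2
  have hX0 : 0 ≤ X := norm_nonneg _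
  have hG0 : 0 ≤ G := norm_nonneg _
  have keypoly : (1 - μ * δ) * δ * ‖a‖ ^ 2
      ≤ δ * (1 + μ * δ) ^ 2 * X ^ 2 + (1 - μ * δ) * μ * G ^ 2 := by
    have hasq' : (1 - μ * δ) * δ * ‖a‖ ^ 2
        ≤ (1 - μ * δ) * δ * ((1 + μ * δ) * X + μ * G) ^ 2 :=
      mul_le_mul_of_nonneg_left hasq (le_of_lt (mul_pos hone hδ))
    have hred : (1 - μ * δ) * δ * ((1 + μ * δ) * X + μ * G) ^ 2
        ≤ δ * (1 + μ * δ) ^ 2 * X ^ 2 + (1 - μ * δ) * μ * G ^ 2 := by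
      nlinarith [mul_nonneg hδ.le
          (sq_nonneg (μ * δ * ((1 + μ * δ) * X) - (1 - μ * δ) * (μ * G))),
        mul_pos hμ0 hδ]
    linarith
  -- Step 3: bound on the noise second moment
  have hgv : ‖gradient J v‖ ≤ G + δ * X := by
    have h := hlip v w
    have : ‖gradient J v‖ ≤ ‖gradient J w‖ + ‖gradient J v - gradient J w‖ := by
      calc ‖gradient J v‖ = ‖gradient J w + (gradient J v - gradient J w)‖ := by
            congr 1; abel
        _ ≤ _ := norm_add_le _ _
    rw [norm_sub_rev] at h
    calc ‖gradient J v‖ ≤ ‖gradient J w‖ + ‖gradient J v - gradient J w‖ := this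
      _ ≤ G + δ * X := by
          rw [norm_sub_rev]
          simp only [hG, hX]
          have := hlip w v
          rw [← hX] at this
          linarith
  have hgv2 : ‖gradient J v‖ ^ 2 ≤ 2 * G ^ 2 + 2 * δ ^ 2 * X ^ 2 := by
    have h1 : ‖gradient J v‖ ^ 2 ≤ (G + δ * X) ^ 2 :=
      pow_le_pow_left₀ (norm_nonneg (gradient J v)) hgv 2
    nlinarith [h1, sq_nonneg (G - δ * X)]
  have hSbound : S ≤ β2 * (2 * G ^ 2 + 2 * δ ^ 2 * X ^ 2) + σ2 := by
    calc S ≤ β2 * ‖gradient J v‖ ^ 2 + σ2 := hs2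
      _ ≤ _ := by nlinarith [mul_le_mul_of_nonneg_left hgv2 hβ2]
  -- Step 4: combine
  rw [hexp]
  have hpos : (0:ℝ) < (1 - μ * δ) * δ := mul_pos hone hδ
  have hexpand : (1 - μ * δ) * δ *
      (((1 + μ * δ) ^ 2 + 2 * μ ^ 2 * β2 * δ ^ 2 * (1 - μ * δ)) / (1 - μ * δ) * X ^ 2
        + μ * (1 / δ + 2 * μ * β2) * G ^ 2 + μ ^ 2 * σ2)
      = (δ * (1 + μ * δ) ^ 2 * X ^ 2 + 2 * μ ^ 2 * β2 * δ ^ 3 * (1 - μ * δ) * X ^ 2)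
        + ((1 - μ * δ) * μ * G ^ 2 + 2 * μ ^ 2 * β2 * δ * (1 - μ * δ) * G ^ 2)
        + (1 - μ * δ) * δ * μ ^ 2 * σ2 := by
    field_simp
  refine le_of_mul_le_mul_left ?_ hpos
  rw [hexpand]
  have hm : (1 - μ * δ) * δ * μ ^ 2 * S
      ≤ (1 - μ * δ) * δ * μ ^ 2 * (β2 * (2 * G ^ 2 + 2 * δ ^ 2 * X ^ 2) + σ2) :=
    mul_le_mul_of_nonneg_left hSbound (by positivity)
  nlinarith [keypoly, hm]
end

section
/- Let a ∈ ℝ^M be a fixed vector, μ > 0, g ≥ 0 a real number, and let s : Ω → ℝ^M be a random vector with E[s] = 0, E[‖s‖²] ≤ β²g² + σ², and E[‖s‖⁴] ≤ β⁴g⁴ + σ⁴. Then E[‖a + μs‖⁴] ≤ ‖a‖⁴ + 3μ⁴(β⁴g⁴ + σ⁴) + 8μ²‖a‖²(β²g² + σ²). -/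
open MeasureTheory

lemma pointwise_fourth_bound {E : Type*} [NormedAddCommGroup E] [InnerProductSpace ℝ E]
    (a x : E) (μ : ℝ) :
    ‖a + μ • x‖ ^ 4 ≤ ‖a‖ ^ 4 + 3 * μ ^ 4 * ‖x‖ ^ 4 + 8 * μ ^ 2 * ‖a‖ ^ 2 * ‖x‖ ^ 2
      + 4 * μ * ‖a‖ ^ 2 * (inner ℝ a x : ℝ) := by
  have h2 : ‖a + μ • x‖ ^ 2 = ‖a‖ ^ 2 + 2 * (μ * (inner ℝ a x : ℝ)) + μ ^ 2 * ‖x‖ ^ 2 := by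
    rw [@norm_add_sq_real, real_inner_smul_right, norm_smul]
    simp [mul_pow]
  have h4 : ‖a + μ • x‖ ^ 4 = (‖a + μ • x‖ ^ 2) ^ 2 := by ring
  rw [h4, h2]
  have cs : (inner ℝ a x : ℝ) ^ 2 ≤ ‖a‖ ^ 2 * ‖x‖ ^ 2 := by
    have := real_inner_mul_inner_self_le a x
    rw [real_inner_self_eq_norm_sq, real_inner_self_eq_norm_sq] at this
    nlinarith [this]
  nlinarith [sq_nonneg (μ * (inner ℝ a x : ℝ) - μ ^ 2 * ‖x‖ ^ 2), sq_nonneg μ,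
    sq_nonneg (‖x‖), sq_nonneg (‖a‖), mul_nonneg (sq_nonneg μ) (sq_nonneg ‖x‖), cs,
    mul_nonneg (mul_nonneg (sq_nonneg μ) (sq_nonneg ‖x‖)) (sq_nonneg ‖a‖)]

/-- Fourth-moment bound for a deterministic vector plus scaled zero-mean noise:
if `E[s] = 0`, `E[‖s‖²] ≤ β²g² + σ²` and `E[‖s‖⁴] ≤ β⁴g⁴ + σ⁴`, then
`E[‖a + μs‖⁴] ≤ ‖a‖⁴ + 3μ⁴(β⁴g⁴ + σ⁴) + 8μ²‖a‖²(β²g² + σ²)`. -/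
theorem fourth_moment_update_bound
    {Ω : Type*} [MeasurableSpace Ω] (P : Measure Ω) [IsProbabilityMeasure P]
    {M : ℕ} (a : EuclideanSpace ℝ (Fin M)) (μ : ℝ) (hμ : 0 < μ)
    (g : ℝ) (hg : 0 ≤ g) (β σ : ℝ) (hβ : 0 ≤ β) (hσ : 0 ≤ σ)
    (s : Ω → EuclideanSpace ℝ (Fin M))
    (hs_int : Integrable s P)
    (hs_mean : ∫ ω, s ω ∂P = 0)
    (hs2_int : Integrable (fun ω => ‖s ω‖ ^ 2) P)
    (hs2 : ∫ ω, ‖s ω‖ ^ 2 ∂P ≤ β ^ 2 * g ^ 2 + σ ^ 2)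
    (hs4_int : Integrable (fun ω => ‖s ω‖ ^ 4) P)
    (hs4 : ∫ ω, ‖s ω‖ ^ 4 ∂P ≤ β ^ 4 * g ^ 4 + σ ^ 4)
    (h_int : Integrable (fun ω => ‖a + μ • s ω‖ ^ 4) P) :
    ∫ ω, ‖a + μ • s ω‖ ^ 4 ∂P
      ≤ ‖a‖ ^ 4 + 3 * μ ^ 4 * (β ^ 4 * g ^ 4 + σ ^ 4)
        + 8 * μ ^ 2 * ‖a‖ ^ 2 * (β ^ 2 * g ^ 2 + σ ^ 2) := by
  have hinner_int : Integrable (fun ω => (inner ℝ a (s ω) : ℝ)) P := hs_int.const_inner a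
  have hinner : ∫ ω, (inner ℝ a (s ω) : ℝ) ∂P = 0 := by
    rw [integral_inner hs_int, hs_mean, inner_zero_right]
  have hbound_int : Integrable (fun ω =>
      ‖a‖ ^ 4 + 3 * μ ^ 4 * ‖s ω‖ ^ 4 + 8 * μ ^ 2 * ‖a‖ ^ 2 * ‖s ω‖ ^ 2
        + 4 * μ * ‖a‖ ^ 2 * (inner ℝ a (s ω) : ℝ)) P := by
    exact (((integrable_const _).add (hs4_int.const_mul _)).add
      (hs2_int.const_mul _)).add (hinner_int.const_mul _)
  have hmono : ∫ ω, ‖a + μ • s ω‖ ^ 4 ∂P ≤ ∫ ω,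
      (‖a‖ ^ 4 + 3 * μ ^ 4 * ‖s ω‖ ^ 4 + 8 * μ ^ 2 * ‖a‖ ^ 2 * ‖s ω‖ ^ 2
        + 4 * μ * ‖a‖ ^ 2 * (inner ℝ a (s ω) : ℝ)) ∂P := by
    apply integral_mono h_int hbound_int
    intro ω
    exact pointwise_fourth_bound a (s ω) μ
  have heq : ∫ ω,
      (‖a‖ ^ 4 + 3 * μ ^ 4 * ‖s ω‖ ^ 4 + 8 * μ ^ 2 * ‖a‖ ^ 2 * ‖s ω‖ ^ 2
        + 4 * μ * ‖a‖ ^ 2 * (inner ℝ a (s ω) : ℝ)) ∂P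
      = ‖a‖ ^ 4 + 3 * μ ^ 4 * (∫ ω, ‖s ω‖ ^ 4 ∂P)
        + 8 * μ ^ 2 * ‖a‖ ^ 2 * (∫ ω, ‖s ω‖ ^ 2 ∂P)
        + 4 * μ * ‖a‖ ^ 2 * (∫ ω, (inner ℝ a (s ω) : ℝ) ∂P) := by
    have e1 : ∫ ω, (‖a‖ ^ 4 + 3 * μ ^ 4 * ‖s ω‖ ^ 4 + 8 * μ ^ 2 * ‖a‖ ^ 2 * ‖s ω‖ ^ 2
        + 4 * μ * ‖a‖ ^ 2 * (inner ℝ a (s ω) : ℝ)) ∂P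
        = (∫ ω, (‖a‖ ^ 4 + 3 * μ ^ 4 * ‖s ω‖ ^ 4 + 8 * μ ^ 2 * ‖a‖ ^ 2 * ‖s ω‖ ^ 2) ∂P)
          + ∫ ω, 4 * μ * ‖a‖ ^ 2 * (inner ℝ a (s ω) : ℝ) ∂P :=
      integral_add (((integrable_const _).add (hs4_int.const_mul _)).add
        (hs2_int.const_mul _)) (hinner_int.const_mul _)
    have e2 : ∫ ω, (‖a‖ ^ 4 + 3 * μ ^ 4 * ‖s ω‖ ^ 4 + 8 * μ ^ 2 * ‖a‖ ^ 2 * ‖s ω‖ ^ 2) ∂P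
        = (∫ ω, (‖a‖ ^ 4 + 3 * μ ^ 4 * ‖s ω‖ ^ 4) ∂P)
          + ∫ ω, 8 * μ ^ 2 * ‖a‖ ^ 2 * ‖s ω‖ ^ 2 ∂P :=
      integral_add ((integrable_const _).add (hs4_int.const_mul _)) (hs2_int.const_mul _)
    have e3 : ∫ ω, (‖a‖ ^ 4 + 3 * μ ^ 4 * ‖s ω‖ ^ 4) ∂P
        = (∫ (_ : Ω), ‖a‖ ^ 4 ∂P) + ∫ ω, 3 * μ ^ 4 * ‖s ω‖ ^ 4 ∂P :=
      integral_add (integrable_const _) (hs4_int.const_mul _)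
    rw [e1, e2, e3, integral_const, integral_const_mul, integral_const_mul, integral_const_mul]
    simp
  rw [heq, hinner, mul_zero, add_zero] at hmono
  have h1 : 3 * μ ^ 4 * (∫ ω, ‖s ω‖ ^ 4 ∂P) ≤ 3 * μ ^ 4 * (β ^ 4 * g ^ 4 + σ ^ 4) := by
    apply mul_le_mul_of_nonneg_left hs4; positivity
  have h2 : 8 * μ ^ 2 * ‖a‖ ^ 2 * (∫ ω, ‖s ω‖ ^ 2 ∂P)
      ≤ 8 * μ ^ 2 * ‖a‖ ^ 2 * (β ^ 2 * g ^ 2 + σ ^ 2) := by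
    apply mul_le_mul_of_nonneg_left hs2; positivity
  linarith
end

section
/- Let A be a symmetric M×M real matrix with −δI ⪯ A ⪯ δI for some δ > 0, let 0 < μ < 1/δ, j ≥ 1 an integer, and set S = Σ_{k=1}^{j} (I − μA)^{k−1}. Then for every g ∈ ℝ^M: μ gᵀ S A S g ≤ gᵀ S g. -/
open Matrix

private lemma psd_smul {n : ℕ} {X : Matrix (Fin n) (Fin n) ℝ} (hX : X.PosSemidef)
    {c : ℝ} (hc : 0 ≤ c) : (c • X).PosSemidef := by
  refine posSemidef_iff_dotProduct_mulVec.mpr ⟨?_, fun x => ?_⟩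
  · unfold Matrix.IsHermitian
    rw [conjTranspose_smul, hX.1]
    simp
  · rw [smul_mulVec, dotProduct_smul]
    exact smul_nonneg hc (hX.dotProduct_mulVec_nonneg x)

/-- Matrix spectral inequality: for a symmetric matrix `A` with `−δI ⪯ A ⪯ δI`,
`0 < μ < 1/δ`, `j ≥ 1` and `S = Σ_{k=1}^{j} (I − μA)^{k−1}`, one has
`μ gᵀ S A S g ≤ gᵀ S g` for every `g`. -/
theorem matrix_geometric_sum_spectral_ineq
    {M : ℕ} (A : Matrix (Fin M) (Fin M) ℝ) (hA : A.IsSymm)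
    (δ : ℝ) (hδ : 0 < δ)
    (hlow : (A + δ • (1 : Matrix (Fin M) (Fin M) ℝ)).PosSemidef)
    (hup : (δ • (1 : Matrix (Fin M) (Fin M) ℝ) - A).PosSemidef)
    (μ : ℝ) (hμ0 : 0 < μ) (hμ : μ < 1 / δ) (j : ℕ) (hj : 1 ≤ j) :
    ∀ g : Fin M → ℝ,
      μ * (g ⬝ᵥ (((∑ k ∈ Finset.Icc 1 j, ((1 : Matrix (Fin M) (Fin M) ℝ) - μ • A) ^ (k - 1))
            * A
            * (∑ k ∈ Finset.Icc 1 j, ((1 : Matrix (Fin M) (Fin M) ℝ) - μ • A) ^ (k - 1))).mulVec g))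
        ≤ g ⬝ᵥ ((∑ k ∈ Finset.Icc 1 j,
            ((1 : Matrix (Fin M) (Fin M) ℝ) - μ • A) ^ (k - 1)).mulVec g) := by
  intro g
  set B : Matrix (Fin M) (Fin M) ℝ := (1 : Matrix (Fin M) (Fin M) ℝ) - μ • A with hBdef
  set S : Matrix (Fin M) (Fin M) ℝ := ∑ k ∈ Finset.Icc 1 j, B ^ (k - 1) with hSdef
  have hμδ : μ * δ < 1 := by
    rw [lt_div_iff₀ hδ] at hμ; linarith
  -- B is positive semidefinite
  have hBpsd : B.PosSemidef := by
    have h1 : ((1 - μ * δ) • (1 : Matrix (Fin M) (Fin M) ℝ)).PosSemidef :=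
      psd_smul Matrix.PosSemidef.one (by linarith)
    have h2 : (μ • (δ • (1 : Matrix (Fin M) (Fin M) ℝ) - A)).PosSemidef :=
      psd_smul hup hμ0.le
    have : B = (1 - μ * δ) • (1 : Matrix (Fin M) (Fin M) ℝ)
        + μ • (δ • (1 : Matrix (Fin M) (Fin M) ℝ) - A) := by
      rw [hBdef]
      module
    rw [this]
    exact h1.add h2
  -- S as a range sum
  have hSr : S = ∑ i ∈ Finset.range j, B ^ i := by
    rw [hSdef, ← Finset.Ico_add_one_right_eq_Icc, Finset.sum_Ico_eq_sum_range]
    simp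
  -- geometric sum identity: S * (1 - B) = 1 - B^j
  have hgeom : S * ((1 : Matrix (Fin M) (Fin M) ℝ) - B) = 1 - B ^ j := by
    have := geom_sum_mul B j
    rw [hSr]
    calc (∑ i ∈ Finset.range j, B ^ i) * (1 - B)
        = -((∑ i ∈ Finset.range j, B ^ i) * (B - 1)) := by noncomm_ring
      _ = -(B ^ j - 1) := by rw [this]
      _ = 1 - B ^ j := by rw [neg_sub]
  have hμA : μ • A = (1 : Matrix (Fin M) (Fin M) ℝ) - B := by rw [hBdef]; abel
  -- key identity : S = B^j * S + μ • (S * A * S)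
  have hkey : S = B ^ j * S + μ • (S * A * S) := by
    have : μ • (S * A * S) = S * (μ • A) * S := by
      rw [Matrix.mul_smul, Matrix.smul_mul]
    rw [this, hμA, hgeom, Matrix.sub_mul, Matrix.one_mul]
    abel
  -- B^j * S is positive semidefinite
  have hBjS : (B ^ j * S).PosSemidef := by
    have : B ^ j * S = ∑ k ∈ Finset.Icc 1 j, B ^ (j + (k - 1)) := by
      rw [hSdef, Finset.mul_sum]
      exact Finset.sum_congr rfl fun k _ => (pow_add B j (k - 1)).symm
    rw [this]
    refine Finset.sum_induction _ Matrix.PosSemidef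
      (fun a b ha hb => ha.add hb) Matrix.PosSemidef.zero ?_
    intro k _
    exact hBpsd.pow _
  have hnn : 0 ≤ g ⬝ᵥ (B ^ j * S).mulVec g := by simpa using hBjS.dotProduct_mulVec_nonneg g
  have hexp : g ⬝ᵥ S.mulVec g
      = g ⬝ᵥ (B ^ j * S).mulVec g + μ * (g ⬝ᵥ (S * A * S).mulVec g) := by
    conv_lhs => rw [hkey]
    rw [Matrix.add_mulVec, dotProduct_add, smul_mulVec, dotProduct_smul]
    rfl
  rw [hexp]
  linarith
end
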